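/- Let d ≥ 2, y ∈ ℝ^d \ {0}, and let Φ_{y,N}(x) = Σ_{m=0}^N J_m(x,y) be the degree-≤N truncation of the harmonic expansion of Φ(x-y) around 0. Then for all x with |x| ≤ |y|/2, one has |Φ(x-y) - Φ_{y,N}(x)| ≤ C_d · (N+1)^{d-2} · (4|x|/(3|y|))^{N+1} · Φ(y/4). -/

import Mathlib

/-!
With `r = 4‖x‖/(3‖y‖) ≤ 2/3`, the term of degree `N + 1 + n` of the tail is bounded by
`C Φ(y/4) (N+1)^(d-2) r^(N+1) · (n+1)^(d-2) (2/3)^n`, because `N + 1 + n ≤ (N+1)(n+1)`;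
summing over `n` gives the claim with `C' = C ∑ (n+1)^(d-2) (2/3)^n + 1`.
This needs `Φ(y/4) ≥ 0`, which fails for `d = 2`, `‖y‖ > 4`. But `Φ(· - y)` is not constant on
the ball, so some `J m` with `m ≥ 1` is not identically zero, and its bound forces `Φ(y/4) > 0`.
-/

open MeasureTheory Metric Filter

noncomputable section

abbrev Euc (d : ℕ) := EuclideanSpace ℝ (Fin d)

/-- Classical pointwise Laplacian. -/
def lap {d : ℕ} (f : Euc d → ℝ) (x : Euc d) : ℝ :=
  ∑ i : Fin d, iteratedFDeriv ℝ 2 f x ![EuclideanSpace.single i 1, EuclideanSpace.single i 1]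

/-- Laplacian of a polynomial. -/
def mvLap {d : ℕ} (q : MvPolynomial (Fin d) ℝ) : MvPolynomial (Fin d) ℝ :=
  ∑ i : Fin d, MvPolynomial.pderiv i (MvPolynomial.pderiv i q)

/-- Evaluation of a polynomial at a point of `ℝ^d`. -/
def peval {d : ℕ} (q : MvPolynomial (Fin d) ℝ) (x : Euc d) : ℝ :=
  MvPolynomial.eval (fun i => x i) q

/-- The fundamental solution of Laplace's equation. -/
def fundSol (d : ℕ) (x : Euc d) : ℝ :=
  if d = 2 then -(1 / (2 * Real.pi)) * Real.log ‖x‖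
  else ((d : ℝ) * ((d : ℝ) - 2) * (volume (ball (0 : Euc d) 1)).toReal)⁻¹ *
    ‖x‖ ^ ((2 : ℝ) - (d : ℝ))

/-- Membership in the Sobolev space `H¹(Ω)`. -/
def MemH1 {d : ℕ} (Ω : Set (Euc d)) (f : Euc d → ℝ) : Prop :=
  MemLp f 2 (volume.restrict Ω) ∧
    ∀ i : Fin d, MemLp (fun x => fderiv ℝ f x (EuclideanSpace.single i 1)) 2 (volume.restrict Ω)

lemma summable_succ_pow_mul_geometric (p : ℕ) {ρ : ℝ} (hρ₀ : 0 ≤ ρ) (hρ : ρ < 1) :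
    Summable fun n : ℕ => ((n : ℝ) + 1) ^ p * ρ ^ n := by
  have hpoly := summable_pow_mul_geometric_of_norm_lt_one p (r := ρ)
    (by rwa [Real.norm_of_nonneg hρ₀])
  refine Summable.of_nonneg_of_le (fun n => by positivity) (fun n => ?_)
    ((hpoly.add (summable_geometric_of_lt_one hρ₀ hρ)).mul_left (2 ^ (p - 1)))
  calc ((n : ℝ) + 1) ^ p * ρ ^ n ≤ 2 ^ (p - 1) * ((n : ℝ) ^ p + 1 ^ p) * ρ ^ n := by
        gcongr; exact add_pow_le (Nat.cast_nonneg n) zero_le_one p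
    _ = 2 ^ (p - 1) * ((n : ℝ) ^ p * ρ ^ n + ρ ^ n) := by ring

lemma abs_sub_sum_range_le_of_hasSum {f : ℕ → ℝ} {s : ℝ} (hf : HasSum f s) {p : ℕ}
    {K r ρ : ℝ} (hK : 0 ≤ K) (hr₀ : 0 ≤ r) (hrρ : r ≤ ρ) (hρ : ρ < 1)
    (hbound : ∀ m, 1 ≤ m → |f m| ≤ K * (m : ℝ) ^ p * r ^ m) (N : ℕ) :
    |s - ∑ m ∈ Finset.range (N + 1), f m|
      ≤ K * (∑' n : ℕ, ((n : ℝ) + 1) ^ p * ρ ^ n) * ((N : ℝ) + 1) ^ p * r ^ (N + 1) := by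
  have htail : HasSum (fun n => f (n + (N + 1))) (s - ∑ m ∈ Finset.range (N + 1), f m) :=
    (hasSum_nat_add_iff (N + 1)).mpr (by simpa using hf)
  have hmajorant := (summable_succ_pow_mul_geometric p (hr₀.trans hrρ) hρ).hasSum.mul_left
    (K * ((N : ℝ) + 1) ^ p * r ^ (N + 1))
  refine (htail.norm_le_of_bounded hmajorant fun n => ?_).trans_eq (by ring)
  have hindex : ((n + (N + 1) : ℕ) : ℝ) ≤ ((N : ℝ) + 1) * ((n : ℝ) + 1) := by
    push_cast; nlinarith [(n.cast_nonneg : (0 : ℝ) ≤ n), (N.cast_nonneg : (0 : ℝ) ≤ N)]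
  calc ‖f (n + (N + 1))‖ ≤ K * ((n + (N + 1) : ℕ) : ℝ) ^ p * r ^ (n + (N + 1)) :=
        hbound _ (by omega)
    _ ≤ K * (((N : ℝ) + 1) * ((n : ℝ) + 1)) ^ p * (ρ ^ n * r ^ (N + 1)) := by
        rw [pow_add]; gcongr
    _ = K * ((N : ℝ) + 1) ^ p * r ^ (N + 1) * (((n : ℝ) + 1) ^ p * ρ ^ n) := by
        rw [mul_pow]; ring

lemma peval_eq_of_isHomogeneous_zero {d : ℕ} {q : MvPolynomial (Fin d) ℝ}
    (hq : q.IsHomogeneous 0) (x x' : Euc d) : peval q x = peval q x' := by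
  rw [MvPolynomial.totalDegree_eq_zero_iff_eq_C.mp (Nat.le_zero.mp hq.totalDegree_le)]
  simp [peval]

lemma norm_eq_of_fundSol_eq {d : ℕ} {u v : Euc d} (hu : u ≠ 0) (hv : v ≠ 0)
    (h : fundSol d u = fundSol d v) : ‖u‖ = ‖v‖ := by
  have hu₀ : 0 < ‖u‖ := norm_pos_iff.mpr hu
  have hv₀ : 0 < ‖v‖ := norm_pos_iff.mpr hv
  unfold fundSol at h
  split_ifs at h with hd2
  · have hπ : -(1 / (2 * Real.pi)) ≠ 0 := by have := Real.pi_pos; simp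
    exact Real.log_injOn_pos hu₀ hv₀ (mul_left_cancel₀ hπ h)
  · have hd0 : d ≠ 0 := by
      rintro rfl
      exact hu (Subsingleton.elim u 0)
    have he : (2 : ℝ) - d ≠ 0 := by
      rw [sub_ne_zero]; exact_mod_cast (Ne.symm hd2)
    have hk : ((d : ℝ) * ((d : ℝ) - 2) * (volume (ball (0 : Euc d) 1)).toReal)⁻¹ ≠ 0 := by
      have hvol : (volume (ball (0 : Euc d) 1)).toReal ≠ 0 :=
        (ENNReal.toReal_pos (measure_ball_pos volume 0 one_pos).ne' measure_ball_lt_top.ne).ne'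
      have : (d : ℝ) - 2 ≠ 0 := fun h0 => he (by linarith)
      simp [hd0, this, hvol]
    have hpow := mul_left_cancel₀ hk h
    rw [← Real.rpow_rpow_inv hu₀.le he, hpow, Real.rpow_rpow_inv hv₀.le he]

lemma exists_pos_degree_ne_zero_of_hasSum_fundSol {d : ℕ} {y : Euc d} (hy : y ≠ 0)
    {J : ℕ → Euc d → ℝ} (hJ₀ : ∀ x, J 0 x = J 0 0)
    (hsum : ∀ x ∈ ball (0 : Euc d) ‖y‖, HasSum (fun m => J m x) (fundSol d (x - y))) :
    ∃ m x, 1 ≤ m ∧ J m x ≠ 0 := by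
  by_contra! hJ
  have hJ_eq (x) (hx : x ∈ ball (0 : Euc d) ‖y‖) : fundSol d (x - y) = J 0 0 := by
    rw [← hJ₀ x]
    exact (hsum x hx).unique (hasSum_single 0 fun m hm => hJ m x (Nat.one_le_iff_ne_zero.mpr hm))
  have hy₀ : 0 < ‖y‖ := norm_pos_iff.mpr hy
  have hmid : (2 : ℝ)⁻¹ • y - y = (-2⁻¹ : ℝ) • y := by module
  have hmid_norm : ‖(2 : ℝ)⁻¹ • y‖ < ‖y‖ := by rw [norm_smul]; norm_num; linarith
  have h := norm_eq_of_fundSol_eq (by simpa using hy) (by simp [hmid, hy])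
    ((hJ_eq 0 (mem_ball_self hy₀)).trans (hJ_eq _ (mem_ball_zero_iff.mpr hmid_norm)).symm)
  rw [hmid, zero_sub, norm_neg, norm_smul] at h
  norm_num at h
  linarith

theorem stmt_4_general (d : ℕ) (C : ℝ) (hC : 0 ≤ C) :
    ∃ C' : ℝ, 0 < C' ∧
      ∀ y : Euc d, y ≠ 0 →
        ∀ J : ℕ → Euc d → ℝ,
          (∀ m : ℕ, ∃ q : MvPolynomial (Fin d) ℝ,
            q.IsHomogeneous m ∧ mvLap q = 0 ∧ J m = peval q) →
          (∀ x ∈ ball (0 : Euc d) ‖y‖, HasSum (fun m => J m x) (fundSol d (x - y))) →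
          (∀ m : ℕ, 1 ≤ m → ∀ x : Euc d,
            |J m x| ≤ C * (m : ℝ) ^ (d - 2) * (4 * ‖x‖ / (3 * ‖y‖)) ^ m *
              fundSol d ((4 : ℝ)⁻¹ • y)) →
          ∀ N : ℕ, ∀ x : Euc d, ‖x‖ ≤ ‖y‖ / 2 →
            |fundSol d (x - y) - ∑ m ∈ Finset.range (N + 1), J m x|
              ≤ C' * ((N : ℝ) + 1) ^ (d - 2) * (4 * ‖x‖ / (3 * ‖y‖)) ^ (N + 1) *
                  fundSol d ((4 : ℝ)⁻¹ • y) := by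
  set M := ∑' n : ℕ, ((n : ℝ) + 1) ^ (d - 2) * (2 / 3 : ℝ) ^ n
  have hM : 0 ≤ M := tsum_nonneg fun n => by positivity
  refine ⟨C * M + 1, by positivity, fun y hy J hJ hsum hJb N x hx => ?_⟩
  set Φ := fundSol d ((4 : ℝ)⁻¹ • y)
  have hJ₀ (x : Euc d) : J 0 x = J 0 0 := by
    obtain ⟨q, hq, -, hJq⟩ := hJ 0
    rw [hJq]
    exact peval_eq_of_isHomogeneous_zero hq x 0
  obtain ⟨m, x₁, hm, hJm⟩ := exists_pos_degree_ne_zero_of_hasSum_fundSol hy hJ₀ hsum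
  have hΦ : 0 < Φ :=
    pos_of_mul_pos_right ((abs_pos.mpr hJm).trans_le (hJb m hm x₁)) (by positivity)
  have hy₀ : 0 < ‖y‖ := norm_pos_iff.mpr hy
  have hr : 4 * ‖x‖ / (3 * ‖y‖) ≤ 2 / 3 := by
    rw [div_le_iff₀ (by positivity)]; linarith
  have hx_mem : x ∈ ball (0 : Euc d) ‖y‖ := mem_ball_zero_iff.mpr (by linarith)
  have htail := abs_sub_sum_range_le_of_hasSum (hsum x hx_mem) (K := C * Φ) (by positivity)
    (by positivity) hr (by norm_num) (fun m hm => (hJb m hm x).trans_eq (by ring)) N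
  have hB : 0 ≤ ((N : ℝ) + 1) ^ (d - 2) * (4 * ‖x‖ / (3 * ‖y‖)) ^ (N + 1) * Φ := by positivity
  linarith

/-- tail bound for the truncated harmonic expansion of `x ↦ Φ(x-y)`. -/
theorem stmt_4 (d : ℕ) (hd : 2 ≤ d) (C : ℝ) (hC : 0 ≤ C) :
    ∃ C' : ℝ, 0 < C' ∧
      ∀ y : Euc d, y ≠ 0 →
        ∀ J : ℕ → Euc d → ℝ,
          (∀ m : ℕ, ∃ q : MvPolynomial (Fin d) ℝ,
            q.IsHomogeneous m ∧ mvLap q = 0 ∧ J m = peval q) →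
          (∀ x ∈ ball (0 : Euc d) ‖y‖, HasSum (fun m => J m x) (fundSol d (x - y))) →
          (∀ m : ℕ, 1 ≤ m → ∀ x : Euc d,
            |J m x| ≤ C * (m : ℝ) ^ (d - 2) * (4 * ‖x‖ / (3 * ‖y‖)) ^ m *
              fundSol d ((4 : ℝ)⁻¹ • y)) →
          ∀ N : ℕ, ∀ x : Euc d, ‖x‖ ≤ ‖y‖ / 2 →
            |fundSol d (x - y) - ∑ m ∈ Finset.range (N + 1), J m x|
              ≤ C' * ((N : ℝ) + 1) ^ (d - 2) * (4 * ‖x‖ / (3 * ‖y‖)) ^ (N + 1) *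
                  fundSol d ((4 : ℝ)⁻¹ • y) :=
  stmt_4_general d C hC
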